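/- Let ν ∈ ℝ with ν ≠ 0 and let κ_ν be the smallest positive half-integer (element of ℕ + 1/2) with κ_ν² > ν² + 1/4. Define f_ν(b) := (κ_ν² − 1/4)²·b² + 2(κ_ν² + 1/4)·ν²·b + ν⁴ − 4ν²κ_ν². Then f_ν(|ν|/κ_ν) ≤ ν²·(κ_ν^{−2}/16 + ν² − κ_ν²) < 0. -/
import Mathlib


/-- The quadratic `f_ν(b) = (κν² − 1/4)²b² + 2(κν² + 1/4)ν²b + ν⁴ − 4ν²κν²`. -/
noncomputable def fQuad (ν κν b : ℝ) : ℝ :=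
  (κν ^ 2 - 1 / 4) ^ 2 * b ^ 2 + 2 * (κν ^ 2 + 1 / 4) * ν ^ 2 * b + ν ^ 4 - 4 * ν ^ 2 * κν ^ 2

/-- Let `ν ≠ 0` and let `κν` be the smallest positive half-integer with `κν² > ν² + 1/4`.
Then `f_ν(|ν|/κν) ≤ ν²·(κν^{−2}/16 + ν² − κν²) < 0`. -/
theorem quadratic_negative_at_nu_over_kappa (ν : ℝ) (hν : ν ≠ 0) (κν : ℝ)
    (hκν_half : ∃ n : ℕ, κν = n + 1 / 2)
    (hκν_gt : κν ^ 2 > ν ^ 2 + 1 / 4)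
    (hκν_min : ∀ κ : ℝ, (∃ n : ℕ, κ = n + 1 / 2) → κ ^ 2 > ν ^ 2 + 1 / 4 → κν ≤ κ) :
    fQuad ν κν (|ν| / κν) ≤ ν ^ 2 * ((κν ^ 2)⁻¹ / 16 + ν ^ 2 - κν ^ 2) ∧
      ν ^ 2 * ((κν ^ 2)⁻¹ / 16 + ν ^ 2 - κν ^ 2) < 0 := by
  have hκhalf : (1:ℝ)/2 ≤ κν := by
    obtain ⟨n, rfl⟩ := hκν_half
    have : (0:ℝ) ≤ n := n.cast_nonneg
    linarith
  have hκ0 : 0 < κν := by linarith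
  have hκne : κν ≠ 0 := ne_of_gt hκ0
  have hsq : |ν| ^ 2 = ν ^ 2 := sq_abs ν
  have habs : |ν| < κν := by nlinarith [abs_nonneg ν]
  have hν2 : 0 < ν ^ 2 := by positivity
  have hD : fQuad ν κν (|ν| / κν) - ν ^ 2 * ((κν ^ 2)⁻¹ / 16 + ν ^ 2 - κν ^ 2)
      = 2 * ν ^ 2 / κν * (κν ^ 2 + 1 / 4) * (|ν| - κν) := by
    have hν4 : ν ^ 4 = |ν| ^ 2 * |ν| ^ 2 := by rw [hsq]; ring
    unfold fQuad
    rw [← hsq, hν4]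
    field_simp
    ring
  constructor
  · have h1 : 2 * ν ^ 2 / κν * (κν ^ 2 + 1 / 4) * (|ν| - κν) ≤ 0 := by
      apply mul_nonpos_of_nonneg_of_nonpos
      · positivity
      · linarith
    linarith
  · have hinv : (κν ^ 2)⁻¹ ≤ 4 := by
      rw [inv_le_comm₀ (by positivity) (by norm_num)]
      nlinarith
    nlinarith
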